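/- Let R be a p×d random matrix with independent columns r₁,…,r_d, each satisfying the convex concentration property with constant K. Then for every unit vector u ∈ ℝ^d, the random vector Ru = Σᵢ uᵢ rᵢ satisfies the convex concentration property with constant C·K for an absolute constant C. -/

import Mathlib

open MeasureTheory ProbabilityTheory Real Finset

noncomputable def vecNorm {ι : Type*} [Fintype ι] (x : ι → ℝ) : ℝ :=
  Real.sqrt (∑ i, (x i) ^ 2)

noncomputable def frobNorm {m ι : Type*} [Fintype m] [Fintype ι] (X : Matrix m ι ℝ) : ℝ :=
  Real.sqrt (∑ i, ∑ j, (X i j) ^ 2)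

noncomputable def specNorm {m ι : Type*} [Fintype m] [Fintype ι] (X : Matrix m ι ℝ) : ℝ :=
  sSup {c : ℝ | ∃ u : ι → ℝ, vecNorm u = 1 ∧ c = vecNorm (X.mulVec u)}

noncomputable def stableRank {m ι : Type*} [Fintype m] [Fintype ι] (X : Matrix m ι ℝ) : ℝ :=
  frobNorm X ^ 2 / specNorm X ^ 2

def IsSparse {ι : Type*} [Fintype ι] (k : ℕ) (u : ι → ℝ) : Prop :=
  (Finset.univ.filter fun i => u i ≠ 0).card ≤ k

def SubgaussianLe {Ω : Type*} [MeasurableSpace Ω] (μ : Measure Ω) (x : Ω → ℝ) (K : ℝ) : Prop :=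
  ∀ a : ℝ, 1 ≤ a → (∫ ω, |x ω| ^ a ∂μ) ^ (1 / a) ≤ K * Real.sqrt a
/-- Convex concentration property with constant K (Lipschitz w.r.t. the
Euclidean norm, spelled out via `vecNorm`). -/
def CCP {Ω : Type*} [MeasurableSpace Ω] (μ : MeasureTheory.Measure Ω) {p : ℕ}
    (x : Ω → Fin p → ℝ) (K : ℝ) : Prop :=
  ∀ φ : (Fin p → ℝ) → ℝ, ConvexOn ℝ Set.univ φ →
    (∀ y z : Fin p → ℝ, |φ y - φ z| ≤ vecNorm (y - z)) →
    MeasureTheory.Integrable (fun ω => φ (x ω)) μ ∧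
    ∀ t : ℝ, 0 < t →
      μ {ω | t ≤ |φ (x ω) - ∫ ω2, φ (x ω2) ∂μ|} ≤
        ENNReal.ofReal (2 * Real.exp (-t ^ 2 / K ^ 2))

/-!
A tail bound `P(|Z| ≥ t) ≤ 2 exp(-t²/K²)` for a centred real variable gives `E exp(Z²/2K²) ≤ 3`
by the layer-cake formula, hence the sub-Gaussian bound `E exp(lZ) ≤ exp(13 l²K²)` on its moment
generating function; Chernoff's bound turns this back into a tail bound. It therefore suffices to
show that, under the law of `Σ uⱼ rⱼ`, `φ - E φ` has a sub-Gaussian MGF with variance proxy `26K²`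
for every convex 1-Lipschitz `φ`. Scaling `rⱼ` by `uⱼ` multiplies the proxy by `uⱼ²`, and proxies
add over independent summands: with `g x = E φ(x + Y)`,
`φ(X + Y) - E φ = (φ(X + Y) - g X) + (g X - E g X)`, where the first term is sub-Gaussian given `X`
and `g` is again convex and 1-Lipschitz (the two-step martingale decomposition behind Azuma's
inequality). As `Σ uⱼ² = 1` the proxy stays `26K²`, and `2 · 26 ≤ 8²` gives `C = 8`.
-/

open scoped NNReal ENNReal

section Integrals

variable {Ω : Type*} {mΩ : MeasurableSpace Ω} {μ : Measure Ω} {f : Ω → ℝ}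

lemma integrable_of_lintegral_ofReal_le (hf : AEStronglyMeasurable f μ) (hf₀ : 0 ≤ᵐ[μ] f)
    {B : ℝ} (h : ∫⁻ ω, ENNReal.ofReal (f ω) ∂μ ≤ ENNReal.ofReal B) : Integrable f μ :=
  ⟨hf, (hasFiniteIntegral_iff_ofReal hf₀).2 (h.trans_lt ENNReal.ofReal_lt_top)⟩

lemma integral_le_of_lintegral_ofReal_le (hf : AEStronglyMeasurable f μ) (hf₀ : 0 ≤ᵐ[μ] f)
    {B : ℝ} (hB : 0 ≤ B) (h : ∫⁻ ω, ENNReal.ofReal (f ω) ∂μ ≤ ENNReal.ofReal B) :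
    ∫ ω, f ω ∂μ ≤ B := by
  rw [integral_eq_lintegral_of_nonneg_ae hf₀ hf]
  exact ENNReal.toReal_le_of_le_ofReal hB h

end Integrals

lemma integral_Ioi_mul_exp_neg_mul_sq {b : ℝ} (hb : 0 < b) :
    ∫ t in Set.Ioi (0 : ℝ), t * exp (-b * t ^ 2) = (2 * b)⁻¹ := by
  have h := integral_rpow_mul_exp_neg_mul_rpow (p := 2) (q := 1) two_pos (by norm_num) hb
  norm_num [Real.rpow_neg_one] at h
  simpa [mul_comm] using h

lemma exp_le_one_add_add_sq_mul_exp_abs (x : ℝ) : exp x ≤ 1 + x + x ^ 2 * exp |x| := by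
  have h₁ : exp x - 1 ≤ x * exp x := by
    nlinarith [add_one_le_exp (-x), exp_pos x, exp_neg x, mul_inv_cancel₀ (exp_pos x).ne']
  rcases le_total 0 x with hx | hx
  · rw [abs_of_nonneg hx]
    nlinarith [add_one_le_exp x]
  · rw [abs_of_nonpos hx]
    nlinarith [add_one_le_exp x, add_one_le_exp (-x)]

lemma exp_mul_le_one_add_mul_add_mul_exp_sq_div {K : ℝ} (hK : 0 < K) (l z : ℝ) :
    exp (l * z) ≤
      1 + l * z + 4 * (l ^ 2 * K ^ 2) * exp (l ^ 2 * K ^ 2) * exp (z ^ 2 / (2 * K ^ 2)) := by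
  set a := l ^ 2 * K ^ 2
  set w := z ^ 2 / (4 * K ^ 2)
  have habs : |l * z| ≤ a + w := by
    have h := sq_nonneg (|l| * K - |z| / (2 * K))
    have e : (|l| * K - |z| / (2 * K)) ^ 2 = a + w - |l * z| := by
      simp only [a, w, abs_mul]; field_simp; ring_nf; rw [sq_abs, sq_abs]; ring
    linarith
  have hsq : (l * z) ^ 2 ≤ 4 * a * exp w := by
    rw [show (l * z) ^ 2 = 4 * a * w by simp only [a, w]; field_simp]
    gcongr
    linarith [add_one_le_exp w]
  calc exp (l * z) ≤ 1 + l * z + (l * z) ^ 2 * exp |l * z| := exp_le_one_add_add_sq_mul_exp_abs _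
    _ ≤ 1 + l * z + 4 * a * exp w * exp (a + w) := by gcongr
    _ = _ := by
      rw [exp_add, show z ^ 2 / (2 * K ^ 2) = w + w by simp only [w]; field_simp; ring, exp_add]
      ring

namespace ProbabilityTheory

section Tail

variable {Ω : Type*} {mΩ : MeasurableSpace Ω} {μ : Measure Ω} {Z : Ω → ℝ} {K : ℝ}

lemma lintegral_exp_sq_sub_one_le_two (hZ : AEMeasurable Z μ) (hK : 0 < K)
    (htail : ∀ t > 0, μ {ω | t ≤ |Z ω|} ≤ ENNReal.ofReal (2 * exp (-t ^ 2 / K ^ 2))) :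
    ∫⁻ ω, ENNReal.ofReal (exp (Z ω ^ 2 / (2 * K ^ 2)) - 1) ∂μ ≤ 2 := by
  set g : ℝ → ℝ := fun t => t / K ^ 2 * exp (t ^ 2 / (2 * K ^ 2))
  have hg_cont : Continuous g := by fun_prop
  have hg_int (u : ℝ) : ∫ t in 0..u, g t = exp (u ^ 2 / (2 * K ^ 2)) - 1 := by
    rw [intervalIntegral.integral_eq_sub_of_hasDerivAt (f := fun t => exp (t ^ 2 / (2 * K ^ 2)))
      (fun t _ => ?_) (hg_cont.intervalIntegrable _ _)]
    · simp
    · refine (((hasDerivAt_pow 2 t).div_const (2 * K ^ 2)).exp).congr_deriv ?_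
      simp only [g]
      field_simp
      ring
  have hlayer := lintegral_comp_eq_lintegral_meas_le_mul μ (ae_of_all _ fun ω => abs_nonneg (Z ω))
    hZ.abs (fun t _ => hg_cont.intervalIntegrable _ _)
    (ae_restrict_of_forall_mem measurableSet_Ioi fun t (ht : 0 < t) => by positivity)
  simp only [hg_int, sq_abs] at hlayer
  have hb : (0 : ℝ) < (2 * K ^ 2)⁻¹ := by positivity
  rw [hlayer]
  calc _ ≤ ∫⁻ t in Set.Ioi 0, ENNReal.ofReal (2 / K ^ 2 * (t * exp (-(2 * K ^ 2)⁻¹ * t ^ 2))) := by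
        refine setLIntegral_mono (by fun_prop) fun t ht => ?_
        calc _ ≤ ENNReal.ofReal (2 * exp (-t ^ 2 / K ^ 2)) * ENNReal.ofReal (g t) := by
              gcongr
              exact htail t ht
          _ = _ := by
              rw [← ENNReal.ofReal_mul (by positivity)]
              congr 1
              rw [show -t ^ 2 / K ^ 2 = -(2 * K ^ 2)⁻¹ * t ^ 2 + -(t ^ 2 / (2 * K ^ 2)) by
                field_simp; ring, exp_add, exp_neg]
              simp only [g]
              field_simp
    _ = ENNReal.ofReal (2 / K ^ 2 * (2 * (2 * K ^ 2)⁻¹)⁻¹) := by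
        rw [← integral_Ioi_mul_exp_neg_mul_sq hb, ← integral_const_mul,
          ofReal_integral_eq_lintegral_ofReal]
        · exact ((integrable_mul_exp_neg_mul_sq hb).integrableOn).const_mul _
        · exact ae_restrict_of_forall_mem measurableSet_Ioi fun t (ht : 0 < t) => by positivity
    _ = 2 := by
        rw [← ENNReal.ofReal_ofNat]
        congr 1
        field_simp

lemma lintegral_exp_sq_le_three [IsProbabilityMeasure μ] (hZ : AEMeasurable Z μ) (hK : 0 < K)
    (htail : ∀ t > 0, μ {ω | t ≤ |Z ω|} ≤ ENNReal.ofReal (2 * exp (-t ^ 2 / K ^ 2))) :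
    ∫⁻ ω, ENNReal.ofReal (exp (Z ω ^ 2 / (2 * K ^ 2))) ∂μ ≤ ENNReal.ofReal 3 := by
  calc ∫⁻ ω, ENNReal.ofReal (exp (Z ω ^ 2 / (2 * K ^ 2))) ∂μ
      ≤ ∫⁻ ω, (ENNReal.ofReal (exp (Z ω ^ 2 / (2 * K ^ 2)) - 1) + 1) ∂μ := by
        refine lintegral_mono fun ω => ?_
        rw [← ENNReal.ofReal_one]
        exact ENNReal.ofReal_add_le.trans_eq' (by rw [sub_add_cancel])
    _ = ∫⁻ ω, ENNReal.ofReal (exp (Z ω ^ 2 / (2 * K ^ 2)) - 1) ∂μ + 1 := by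
        rw [lintegral_add_right _ measurable_const, lintegral_const, measure_univ, one_mul]
    _ ≤ 2 + 1 := by gcongr; exact lintegral_exp_sq_sub_one_le_two hZ hK htail
    _ = ENNReal.ofReal 3 := by norm_num

lemma hasSubgaussianMGF_of_integral_exp_sq_le [IsProbabilityMeasure μ] (hZ : Integrable Z μ)
    (hZ₀ : μ[Z] = 0) (hK : 0 < K)
    (hΨ : Integrable (fun ω => exp (Z ω ^ 2 / (2 * K ^ 2))) μ)
    (hΨ_le : ∫ ω, exp (Z ω ^ 2 / (2 * K ^ 2)) ∂μ ≤ 3) :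
    HasSubgaussianMGF Z (26 * K ^ 2).toNNReal μ := by
  set B : ℝ → Ω → ℝ := fun l ω =>
    1 + l * Z ω + 4 * (l ^ 2 * K ^ 2) * exp (l ^ 2 * K ^ 2) * exp (Z ω ^ 2 / (2 * K ^ 2))
  have hlin (l : ℝ) : Integrable (fun ω => 1 + l * Z ω) μ :=
    (integrable_const 1).add (hZ.const_mul l)
  have hB_int (l : ℝ) : Integrable (B l) μ := (hlin l).add (hΨ.const_mul _)
  have hexp_le (l : ℝ) (ω : Ω) : exp (l * Z ω) ≤ B l ω :=
    exp_mul_le_one_add_mul_add_mul_exp_sq_div hK l (Z ω)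
  have hexp_int (l : ℝ) : Integrable (fun ω => exp (l * Z ω)) μ :=
    (hB_int l).mono' (measurable_exp.comp_aemeasurable
      (hZ.aemeasurable.const_mul l)).aestronglyMeasurable
      (ae_of_all _ fun ω => by simpa [abs_of_pos (exp_pos _)] using hexp_le l ω)
  refine ⟨hexp_int, fun l => ?_⟩
  set a := l ^ 2 * K ^ 2
  have ha : 0 ≤ a := by positivity
  calc mgf Z μ l ≤ μ[B l] := integral_mono (hexp_int l) (hB_int l) (hexp_le l)
    _ = 1 + 4 * a * exp a * ∫ ω, exp (Z ω ^ 2 / (2 * K ^ 2)) ∂μ := by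
      simp only [B]
      rw [integral_add (hlin l) (hΨ.const_mul _), integral_add (integrable_const 1)
        (hZ.const_mul l), integral_const_mul, integral_const_mul, hZ₀]
      simp [a]
    _ ≤ 1 + 12 * a * exp a := by
      nlinarith [mul_le_mul_of_nonneg_left hΨ_le (by positivity : 0 ≤ 4 * a * exp a)]
    _ ≤ exp (12 * a) * exp a := by nlinarith [add_one_le_exp (12 * a), one_le_exp ha, exp_pos a]
    _ = _ := by
      rw [← exp_add, Real.coe_toNNReal _ (by positivity)]
      simp only [a]
      ring_nf

lemma hasSubgaussianMGF_of_measure_abs_ge_le [IsProbabilityMeasure μ] (hZ : Integrable Z μ)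
    (hZ₀ : μ[Z] = 0) (hK : 0 < K)
    (htail : ∀ t > 0, μ {ω | t ≤ |Z ω|} ≤ ENNReal.ofReal (2 * exp (-t ^ 2 / K ^ 2))) :
    HasSubgaussianMGF Z (26 * K ^ 2).toNNReal μ := by
  have hΨ_meas : AEStronglyMeasurable (fun ω => exp (Z ω ^ 2 / (2 * K ^ 2))) μ :=
    (measurable_exp.comp_aemeasurable
      ((hZ.aemeasurable.pow_const 2).div_const _)).aestronglyMeasurable
  have hΨ_nonneg : 0 ≤ᵐ[μ] fun ω => exp (Z ω ^ 2 / (2 * K ^ 2)) :=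
    ae_of_all _ fun ω => (exp_pos _).le
  have hΨ_lint := lintegral_exp_sq_le_three hZ.aemeasurable hK htail
  exact hasSubgaussianMGF_of_integral_exp_sq_le hZ hZ₀ hK
    (integrable_of_lintegral_ofReal_le hΨ_meas hΨ_nonneg hΨ_lint)
    (integral_le_of_lintegral_ofReal_le hΨ_meas hΨ_nonneg (by norm_num) hΨ_lint)

end Tail

namespace HasSubgaussianMGF

variable {Ω Ω' : Type*} {mΩ : MeasurableSpace Ω} {mΩ' : MeasurableSpace Ω'} {μ : Measure Ω}
  {X : Ω → ℝ} {c : ℝ≥0}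

lemma lintegral_exp_mul_le (h : HasSubgaussianMGF X c μ) (t : ℝ) :
    ∫⁻ ω, ENNReal.ofReal (exp (t * X ω)) ∂μ ≤ ENNReal.ofReal (exp (c * t ^ 2 / 2)) := by
  rw [← ofReal_integral_eq_lintegral_ofReal (h.integrable_exp_mul t)
    (ae_of_all _ fun _ => (exp_pos _).le)]
  exact ENNReal.ofReal_le_ofReal (h.mgf_le t)

lemma of_lintegral_exp_mul_le (hX : AEMeasurable X μ)
    (h : ∀ t, ∫⁻ ω, ENNReal.ofReal (exp (t * X ω)) ∂μ ≤ ENNReal.ofReal (exp (c * t ^ 2 / 2))) :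
    HasSubgaussianMGF X c μ := by
  have hmeas (t : ℝ) : AEStronglyMeasurable (fun ω => exp (t * X ω)) μ :=
    (measurable_exp.comp_aemeasurable (hX.const_mul t)).aestronglyMeasurable
  have hpos (t : ℝ) : 0 ≤ᵐ[μ] fun ω => exp (t * X ω) := ae_of_all _ fun _ => (exp_pos _).le
  exact ⟨fun t => integrable_of_lintegral_ofReal_le (hmeas t) (hpos t) (h t),
    fun t => integral_le_of_lintegral_ofReal_le (hmeas t) (hpos t) (exp_pos _).le (h t)⟩

lemma map {μ : Measure Ω'} {f : Ω' → Ω} (hf : AEMeasurable f μ)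
    (hX : AEMeasurable X (μ.map f)) (h : HasSubgaussianMGF (X ∘ f) c μ) :
    HasSubgaussianMGF X c (μ.map f) := by
  have hmeas (t : ℝ) : AEStronglyMeasurable (fun ω => exp (t * X ω)) (μ.map f) :=
    (measurable_exp.comp_aemeasurable (hX.const_mul t)).aestronglyMeasurable
  refine ⟨fun t => ?_, fun t => ?_⟩
  · rw [integrable_map_measure (hmeas t) hf]
    exact h.integrable_exp_mul t
  · rw [mgf_map hf (hmeas t)]
    exact h.mgf_le t

lemma measure_abs_ge_le [IsFiniteMeasure μ] (h : HasSubgaussianMGF X c μ) {ε : ℝ} (hε : 0 ≤ ε) :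
    μ {ω | ε ≤ |X ω|} ≤ ENNReal.ofReal (2 * exp (-ε ^ 2 / (2 * c))) := by
  have hsub : {ω | ε ≤ |X ω|} ⊆ {ω | ε ≤ X ω} ∪ {ω | ε ≤ (-X) ω} :=
    fun ω (hω : ε ≤ |X ω|) => le_abs.mp hω
  calc μ {ω | ε ≤ |X ω|} ≤ μ {ω | ε ≤ X ω} + μ {ω | ε ≤ (-X) ω} :=
        (measure_mono hsub).trans (measure_union_le _ _)
    _ = ENNReal.ofReal (μ.real {ω | ε ≤ X ω} + μ.real {ω | ε ≤ (-X) ω}) := by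
        rw [ENNReal.ofReal_add measureReal_nonneg measureReal_nonneg, ofReal_measureReal,
          ofReal_measureReal]
    _ ≤ ENNReal.ofReal (2 * exp (-ε ^ 2 / (2 * c))) := by
        gcongr
        linarith [h.measure_ge_le hε, h.neg.measure_ge_le hε]

lemma prod_add {α β : Type*} {mα : MeasurableSpace α} {mβ : MeasurableSpace β}
    {ν₁ : Measure α} {ν₂ : Measure β} [SFinite ν₂] {V : α → ℝ} {U : α → β → ℝ} {c₁ c₂ : ℝ≥0}
    (hX : AEMeasurable (fun q : α × β => V q.1 + U q.1 q.2) (ν₁.prod ν₂))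
    (hV : HasSubgaussianMGF V c₁ ν₁) (hU : ∀ x, HasSubgaussianMGF (U x) c₂ ν₂) :
    HasSubgaussianMGF (fun q : α × β => V q.1 + U q.1 q.2) (c₁ + c₂) (ν₁.prod ν₂) := by
  refine of_lintegral_exp_mul_le hX fun t => ?_
  calc ∫⁻ q, ENNReal.ofReal (exp (t * (V q.1 + U q.1 q.2))) ∂(ν₁.prod ν₂)
      = ∫⁻ x, ENNReal.ofReal (exp (t * V x)) * ∫⁻ y, ENNReal.ofReal (exp (t * U x y)) ∂ν₂ ∂ν₁ := by
        rw [lintegral_prod _ (by fun_prop)]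
        refine lintegral_congr fun x => ?_
        rw [← lintegral_const_mul' _ _ ENNReal.ofReal_ne_top]
        refine lintegral_congr fun y => ?_
        rw [← ENNReal.ofReal_mul (exp_pos _).le, ← exp_add, mul_add]
    _ ≤ ∫⁻ x, ENNReal.ofReal (exp (t * V x)) * ENNReal.ofReal (exp (c₂ * t ^ 2 / 2)) ∂ν₁ := by
        gcongr with x
        exact (hU x).lintegral_exp_mul_le t
    _ ≤ ENNReal.ofReal (exp (c₁ * t ^ 2 / 2)) * ENNReal.ofReal (exp (c₂ * t ^ 2 / 2)) := by
        rw [lintegral_mul_const' _ _ ENNReal.ofReal_ne_top]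
        gcongr
        exact hV.lintegral_exp_mul_le t
    _ = ENNReal.ofReal (exp ((c₁ + c₂ : ℝ≥0) * t ^ 2 / 2)) := by
        rw [← ENNReal.ofReal_mul (exp_pos _).le, ← exp_add]
        push_cast
        ring_nf

end HasSubgaussianMGF

end ProbabilityTheory

lemma LipschitzWith.integral_comp_add {E : Type*} [NormedAddCommGroup E] [MeasurableSpace E]
    {ν : Measure E} [IsProbabilityMeasure ν] {φ : E → ℝ} {K : ℝ≥0} (hlip : LipschitzWith K φ)
    (hint : ∀ x, Integrable (fun y => φ (x + y)) ν) :
    LipschitzWith K (fun x => ∫ y, φ (x + y) ∂ν) := by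
  refine LipschitzWith.of_dist_le_mul fun x x' => ?_
  rw [dist_eq_norm, ← integral_sub (hint x) (hint x')]
  refine (norm_integral_le_of_norm_le_const (C := K * dist x x')
    (ae_of_all _ fun y => ?_)).trans_eq (by simp)
  rw [← dist_eq_norm]
  simpa using hlip.dist_le_mul (x + y) (x' + y)

section ConvexSubgaussian

variable {E : Type*} [NormedAddCommGroup E] [NormedSpace ℝ E] [MeasurableSpace E]

lemma ConvexOn.integral_comp_add {ν : Measure E} {φ : E → ℝ} (hconv : ConvexOn ℝ Set.univ φ)
    (hint : ∀ x, Integrable (fun y => φ (x + y)) ν) :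
    ConvexOn ℝ Set.univ (fun x => ∫ y, φ (x + y) ∂ν) := by
  refine ⟨convex_univ, fun x₁ _ x₂ _ a b ha hb hab => ?_⟩
  have key (y : E) : φ (a • x₁ + b • x₂ + y) ≤ a * φ (x₁ + y) + b * φ (x₂ + y) := by
    rw [show a • x₁ + b • x₂ + y = a • (x₁ + y) + b • (x₂ + y) by
      rw [smul_add, smul_add, add_add_add_comm, ← add_smul, hab, one_smul]]
    exact hconv.2 (Set.mem_univ _) (Set.mem_univ _) ha hb hab
  have hint₁ := (hint x₁).const_mul a
  have hint₂ := (hint x₂).const_mul b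
  calc ∫ y, φ (a • x₁ + b • x₂ + y) ∂ν ≤ ∫ y, (a * φ (x₁ + y) + b * φ (x₂ + y)) ∂ν :=
        integral_mono (hint _) (hint₁.add hint₂) key
    _ = _ := by rw [integral_add hint₁ hint₂, integral_const_mul, integral_const_mul]; rfl

def HasConvexSubgaussianMGF (ν : Measure E) (c : ℝ≥0) : Prop :=
  ∀ φ : E → ℝ, ConvexOn ℝ Set.univ φ → LipschitzWith 1 φ →
    HasSubgaussianMGF (fun y => φ y - ∫ z, φ z ∂ν) c ν

namespace HasConvexSubgaussianMGF

variable {ν ν₁ ν₂ : Measure E} {c c₁ c₂ : ℝ≥0} {φ : E → ℝ}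

lemma integrable [IsFiniteMeasure ν] (h : HasConvexSubgaussianMGF ν c)
    (hconv : ConvexOn ℝ Set.univ φ) (hlip : LipschitzWith 1 φ) : Integrable φ ν := by
  simpa [sub_eq_add_neg, integrable_add_const_iff] using (h φ hconv hlip).integrable

lemma dirac [BorelSpace E] (x : E) : HasConvexSubgaussianMGF (Measure.dirac x) 0 := fun φ _ _ => by
  refine HasSubgaussianMGF.zero.congr ?_
  rw [integral_dirac]
  simpa using (ae_eq_dirac (a := x) (fun y => φ y - φ x)).symm

lemma map_smul [BorelSpace E] [IsProbabilityMeasure ν] (h : HasConvexSubgaussianMGF ν c) (a : ℝ) :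
    HasConvexSubgaussianMGF (ν.map (a • ·)) (‖a‖₊ ^ 2 * c) := by
  intro φ hconv hlip
  have hsmul : Measurable (fun y : E => a • y) := measurable_const_smul a
  rw [integral_map hsmul.aemeasurable hlip.continuous.aestronglyMeasurable]
  refine HasSubgaussianMGF.map hsmul.aemeasurable
    (hlip.continuous.measurable.sub_const _).aemeasurable ?_
  rcases eq_or_ne a 0 with rfl | ha
  · convert HasSubgaussianMGF.fun_zero (μ := ν) using 1 <;> simp [Function.comp_def]
  set ψ : E → ℝ := fun y => |a|⁻¹ • φ (a • y)
  have hψconv : ConvexOn ℝ Set.univ ψ := by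
    have h := (hconv.comp_linearMap (a • LinearMap.id)).smul (inv_nonneg.2 (abs_nonneg a))
    rwa [Set.preimage_univ] at h
  have hψlip : LipschitzWith 1 ψ := by
    have h := (lipschitzWith_smul |a|⁻¹).comp (hlip.comp (lipschitzWith_smul a))
    rwa [one_mul, nnnorm_inv, nnnorm_abs, inv_mul_cancel₀ (nnnorm_ne_zero_iff.2 ha)] at h
  convert (h ψ hψconv hψlip).const_mul |a| using 1
  · funext y
    simp [ψ, integral_const_mul, mul_sub, ha]
  · ext
    simp; rfl

lemma conv [BorelSpace E] [SecondCountableTopology E] [IsProbabilityMeasure ν₁]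
    [IsProbabilityMeasure ν₂] (h₁ : HasConvexSubgaussianMGF ν₁ c₁)
    (h₂ : HasConvexSubgaussianMGF ν₂ c₂) : HasConvexSubgaussianMGF (ν₁ ∗ ν₂) (c₁ + c₂) := by
  intro φ hconv hlip
  set g : E → ℝ := fun x => ∫ y, φ (x + y) ∂ν₂
  set m := ∫ x, g x ∂ν₁
  have hshift_conv (x : E) : ConvexOn ℝ Set.univ (fun y => φ (x + y)) := by
    have h := hconv.translate_right x
    rwa [Set.preimage_univ] at h
  have hshift_lip (x : E) : LipschitzWith 1 (fun y => φ (x + y)) := by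
    have h := hlip.comp (isometry_add_left x).lipschitz
    rwa [mul_one] at h
  have hshift_int (x : E) := h₂.integrable (hshift_conv x) (hshift_lip x)
  have hg_lip : LipschitzWith 1 g := hlip.integral_comp_add hshift_int
  have hV : HasSubgaussianMGF (fun x => g x - m) c₁ ν₁ :=
    h₁ g (hconv.integral_comp_add hshift_int) hg_lip
  have hU (x : E) : HasSubgaussianMGF (fun y => φ (x + y) - g x) c₂ ν₂ :=
    h₂ _ (hshift_conv x) (hshift_lip x)
  have hφ_meas := hlip.continuous.measurable
  have hg_meas := hg_lip.continuous.measurable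
  have hW : HasSubgaussianMGF (fun z => φ z - m) (c₁ + c₂) (ν₁ ∗ ν₂) := by
    refine HasSubgaussianMGF.map (by fun_prop) (by fun_prop) ?_
    refine (hV.prod_add (U := fun x y => φ (x + y) - g x) (by fun_prop) hU).congr
      (ae_of_all _ fun q => ?_)
    simp
  have hm : ∫ z, φ z ∂(ν₁ ∗ ν₂) = m :=
    integral_conv (by simpa [sub_eq_add_neg, integrable_add_const_iff] using hW.integrable)
  rwa [hm]

end HasConvexSubgaussianMGF

lemma ProbabilityTheory.iIndepFun.hasConvexSubgaussianMGF_map_sum [BorelSpace E]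
    [SecondCountableTopology E] {Ω ι : Type*} {mΩ : MeasurableSpace Ω} {μ : Measure Ω}
    [IsProbabilityMeasure μ] {X : ι → Ω → E} (hind : iIndepFun X μ) (hX : ∀ i, Measurable (X i))
    {c : ι → ℝ≥0} (h : ∀ i, HasConvexSubgaussianMGF (μ.map (X i)) (c i)) (s : Finset ι) :
    HasConvexSubgaussianMGF (μ.map (∑ i ∈ s, X i)) (∑ i ∈ s, c i) := by
  classical
  induction s using Finset.induction_on with
  | empty =>
    rw [Finset.sum_empty, Finset.sum_empty, Pi.zero_def, Measure.map_const, measure_univ, one_smul]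
    exact HasConvexSubgaussianMGF.dirac 0
  | insert i s hi ih =>
    have hsum : Measurable (∑ j ∈ s, X j) := by
      rw [Finset.sum_fn]
      exact Finset.measurable_sum s fun j _ => hX j
    have := Measure.isProbabilityMeasure_map (μ := μ) (hX i).aemeasurable
    have := Measure.isProbabilityMeasure_map (μ := μ) hsum.aemeasurable
    rw [Finset.sum_insert hi, Finset.sum_insert hi,
      (hind.indepFun_finsetSum_of_notMem hX hi).symm.map_add_eq_map_conv_map (hX i) hsum]
    exact (h i).conv ih

end ConvexSubgaussian

section Euclidean

variable {p : ℕ}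

lemma vecNorm_eq_norm_toLp (x : Fin p → ℝ) : vecNorm x = ‖WithLp.toLp 2 x‖ := by
  simp [vecNorm, EuclideanSpace.norm_eq]

variable {Ω : Type*} {mΩ : MeasurableSpace Ω} {μ : Measure Ω} [IsProbabilityMeasure μ]
  {x : Ω → Fin p → ℝ}

lemma CCP.hasConvexSubgaussianMGF_map (hx : Measurable x) {K : ℝ} (hK : 0 < K) (h : CCP μ x K) :
    HasConvexSubgaussianMGF (μ.map fun ω => (WithLp.toLp 2 (x ω) : EuclideanSpace ℝ (Fin p)))
      (26 * K ^ 2).toNNReal := by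
  intro φ hconv hlip
  have hX : Measurable fun ω => (WithLp.toLp 2 (x ω) : EuclideanSpace ℝ (Fin p)) := by fun_prop
  have hψ_conv : ConvexOn ℝ Set.univ (φ ∘ WithLp.toLp 2) := by
    have h := hconv.comp_linearMap (WithLp.linearEquiv 2 ℝ (Fin p → ℝ)).symm.toLinearMap
    rwa [Set.preimage_univ] at h
  have hψ_lip (y z : Fin p → ℝ) :
      |(φ ∘ WithLp.toLp 2) y - (φ ∘ WithLp.toLp 2) z| ≤ vecNorm (y - z) := by
    simpa [vecNorm_eq_norm_toLp, dist_eq_norm] using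
      hlip.dist_le_mul (WithLp.toLp 2 y) (WithLp.toLp 2 z)
  obtain ⟨hint, htail⟩ := h _ hψ_conv hψ_lip
  have hint' : Integrable (fun ω => φ (WithLp.toLp 2 (x ω))) μ := hint
  rw [integral_map hX.aemeasurable hlip.continuous.aestronglyMeasurable]
  refine HasSubgaussianMGF.map hX.aemeasurable
    (hlip.continuous.measurable.sub_const _).aemeasurable ?_
  refine hasSubgaussianMGF_of_measure_abs_ge_le (hint'.sub (integrable_const _)) ?_ hK htail
  simp [integral_sub hint' (integrable_const _)]

lemma HasConvexSubgaussianMGF.ccp (hx : Measurable x) {c : ℝ≥0}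
    (h : HasConvexSubgaussianMGF
      (μ.map fun ω => (WithLp.toLp 2 (x ω) : EuclideanSpace ℝ (Fin p))) c)
    {K : ℝ} (hc : 0 < c) (hcK : 2 * c ≤ K ^ 2) : CCP μ x K := by
  intro φ hconv hlip
  have hX : Measurable fun ω => (WithLp.toLp 2 (x ω) : EuclideanSpace ℝ (Fin p)) := by fun_prop
  set ψ : EuclideanSpace ℝ (Fin p) → ℝ := fun y => φ y.ofLp
  have hψ_conv : ConvexOn ℝ Set.univ ψ := by
    have h := hconv.comp_linearMap (WithLp.linearEquiv 2 ℝ (Fin p → ℝ)).toLinearMap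
    rwa [Set.preimage_univ] at h
  have hψ_lip : LipschitzWith 1 ψ := LipschitzWith.of_dist_le_mul fun y z => by
    simpa [ψ, vecNorm_eq_norm_toLp, dist_eq_norm] using hlip y.ofLp z.ofLp
  have hψ_cont : Continuous ψ := hψ_lip.continuous
  have hsub : HasSubgaussianMGF (fun ω => φ (x ω) - ∫ ω', φ (x ω') ∂μ) c μ := by
    have h' := (h ψ hψ_conv hψ_lip).of_map hX.aemeasurable
    rwa [integral_map hX.aemeasurable hψ_cont.aestronglyMeasurable] at h'
  refine ⟨by simpa [sub_eq_add_neg, integrable_add_const_iff] using hsub.integrable,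
    fun t ht => (hsub.measure_abs_ge_le ht.le).trans (ENNReal.ofReal_le_ofReal ?_)⟩
  have hc' : (0 : ℝ) < 2 * c := by positivity
  refine mul_le_mul_of_nonneg_left (exp_le_exp.2 ?_) zero_le_two
  rw [neg_div, neg_div, neg_le_neg_iff]
  exact div_le_div_of_nonneg_left (sq_nonneg t) hc' hcK

lemma CCP.hasConvexSubgaussianMGF_map_smul (hx : Measurable x) {K : ℝ} (hK : 0 < K)
    (h : CCP μ x K) (a : ℝ) :
    HasConvexSubgaussianMGF (μ.map fun ω => (WithLp.toLp 2 (a • x ω) : EuclideanSpace ℝ (Fin p)))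
      (‖a‖₊ ^ 2 * (26 * K ^ 2).toNNReal) := by
  have := Measure.isProbabilityMeasure_map (μ := μ) (by fun_prop :
    AEMeasurable (fun ω => (WithLp.toLp 2 (x ω) : EuclideanSpace ℝ (Fin p))) μ)
  have h' := (h.hasConvexSubgaussianMGF_map hx hK).map_smul a
  rwa [Measure.map_map (measurable_const_smul _) (by fun_prop)] at h'

end Euclidean

/-- a linear combination of independent c.c.p. columns has c.c.p.
with constant C·K. -/
theorem ccp_linear_combination :
    ∃ C > (0:ℝ), ∀ (Ω : Type) (_ : MeasurableSpace Ω) (μ : Measure Ω),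
      IsProbabilityMeasure μ → ∀ (p d : ℕ) (K : ℝ), 0 < K →
      ∀ (r : Fin d → Ω → Fin p → ℝ),
      (∀ j, Measurable (r j)) →
      iIndepFun r μ →
      (∀ j, CCP μ (r j) K) →
      ∀ u : Fin d → ℝ, vecNorm u = 1 →
      CCP μ (fun ω i => ∑ j, u j * r j ω i) (C * K) := by
  refine ⟨8, by norm_num, fun Ω _ μ _ p d K hK r hr hind hccp u hu => ?_⟩
  set X : Fin d → Ω → EuclideanSpace ℝ (Fin p) := fun j ω => WithLp.toLp 2 (u j • r j ω)
  have hX_ind : iIndepFun X μ :=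
    hind.comp (fun j y => WithLp.toLp 2 (u j • y)) fun j => by fun_prop
  have hsum := hX_ind.hasConvexSubgaussianMGF_map_sum (fun j => by fun_prop)
    (fun j => (hccp j).hasConvexSubgaussianMGF_map_smul (hr j) hK (u j)) Finset.univ
  have hu_sq : ∑ j, ‖u j‖₊ ^ 2 = 1 := by
    ext
    simpa [vecNorm, Real.sqrt_eq_one] using hu
  rw [← Finset.sum_mul, hu_sq, one_mul] at hsum
  have hX_sum : ∑ j, X j = fun ω => WithLp.toLp 2 (fun i => ∑ j, u j * r j ω i) := by
    ext ω i
    simp [X, Finset.sum_apply]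
  rw [hX_sum] at hsum
  refine hsum.ccp (by fun_prop) (by positivity) ?_
  rw [Real.coe_toNNReal _ (by positivity)]
  nlinarith [sq_nonneg K]
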